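/- arXiv:2510.25202 — 4 statements merged into one kernel-verified Lean document; each statement's English description precedes it below -/
import Mathlib

section
/- Let π_Q(g) := |X_g|/(z·|G|) for g ∈ G*. Then ∑_{g∈G*} π_Q(g) = 1, π_Q satisfies detailed balance for the dual Burnside kernel, i.e. π_Q(g)·Q(g,h) = π_Q(h)·Q(h,g) for all g,h ∈ G*, and consequently π_Q is stationary for Q: ∑_{g∈G*} π_Q(g)·Q(g,h) = π_Q(h) for every h ∈ G*. -/
/-!
With `w x = 1 / (z |G| |G_x|)` one has `π_Q(g) Q(g,h) = ∑_{x ∈ X_g ∩ X_h} w x`, which is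
symmetric in `g` and `h`: this is detailed balance. Every row of `Q` sums to `1`, since each
`x ∈ X_h` is fixed by exactly `|G_x|` elements of `G*`, and detailed balance for a stochastic
kernel gives stationarity. Finally `π_Q` vanishes off `G*`, so Burnside's lemma
`∑_g |X_g| = z |G|` normalizes it.
-/

open Finset

variable (G X : Type) [Group G] [Fintype G] [DecidableEq G]
  [Fintype X] [DecidableEq X] [Nonempty X] [MulAction G X]

noncomputable section

/-- The fixed-point set `X_g = {x ∈ X : g • x = x}` of a group element. -/
def fixedPts (g : G) : Finset X := Finset.univ.filter fun x => g • x = x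

/-- The stabilizer `G_x = {g ∈ G : g • x = x}` of a point, as a finset. -/
def stab (x : X) : Finset G := Finset.univ.filter fun g => g • x = x

/-- `G* = {g ∈ G : X_g ≠ ∅}`. -/
def Gstar : Finset G := Finset.univ.filter fun g => (fixedPts G X g).Nonempty

/-- The dual Burnside kernel `Q(g,h) = ∑_{x ∈ X_g ∩ X_h} 1/(|X_g|·|G_x|)`. -/
def Q (g h : G) : ℝ :=
  ∑ x ∈ fixedPts G X g ∩ fixedPts G X h,
    1 / (((fixedPts G X g).card : ℝ) * ((stab G X x).card : ℝ))

/-- `z = |X/G|`, the number of `G`-orbits on `X`. -/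
def numOrbits : ℕ := Nat.card (Quotient (MulAction.orbitRel G X))

/-- The dual stationary law `π_Q(g) = |X_g| / (z·|G|)`. -/
def piQ (g : G) : ℝ :=
  ((fixedPts G X g).card : ℝ) / ((numOrbits G X : ℝ) * (Fintype.card G : ℝ))

theorem sum_mul_eq_of_detailed_balance {ι R : Type*} [CommSemiring R] {s : Finset ι}
    {π : ι → R} {P : ι → ι → R} (hrow : ∀ i ∈ s, ∑ j ∈ s, P i j = 1)
    (hdb : ∀ i ∈ s, ∀ j ∈ s, π i * P i j = π j * P j i) {j : ι} (hj : j ∈ s) :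
    ∑ i ∈ s, π i * P i j = π j :=
  calc ∑ i ∈ s, π i * P i j = ∑ i ∈ s, π j * P j i :=
        sum_congr rfl fun i hi => hdb i hi j hj
    _ = π j := by rw [← mul_sum, hrow j hj, mul_one]

section

variable {G X : Type} [Group G] [MulAction G X]

@[simp]
theorem mem_fixedPts [Fintype X] [DecidableEq X] {g : G} {x : X} :
    x ∈ fixedPts G X g ↔ g • x = x := by
  simp [fixedPts]

@[simp]
theorem mem_stab [Fintype G] [DecidableEq X] {g : G} {x : X} :
    g ∈ stab G X x ↔ g • x = x := by
  simp [stab]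

theorem mem_Gstar [Fintype G] [Fintype X] [DecidableEq X] {g : G} :
    g ∈ Gstar G X ↔ (fixedPts G X g).Nonempty := by
  simp [Gstar]

theorem card_stab_pos [Fintype G] [DecidableEq X] (x : X) : 0 < (stab G X x).card :=
  card_pos.mpr ⟨1, by simp⟩

theorem numOrbits_pos [Finite X] [Nonempty X] : 0 < numOrbits G X :=
  have : Nonempty (Quotient (MulAction.orbitRel G X)) := ⟨Quotient.mk _ (Classical.arbitrary X)⟩
  Nat.card_pos

theorem sum_card_fixedPts [Fintype G] [Fintype X] [DecidableEq X] :
    ∑ g : G, (fixedPts G X g).card = numOrbits G X * Fintype.card G := by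
  classical
  have hfix (g : G) : (fixedPts G X g).card = Fintype.card (MulAction.fixedBy X g) := by
    rw [← Set.toFinset_card]
    congr 1
    ext x
    simp
  simp only [hfix, numOrbits, Nat.card_eq_fintype_card]
  convert MulAction.sum_card_fixedBy_eq_card_orbits_mul_card_group G X

theorem sum_piQ_Gstar [Fintype G] [Fintype X] [DecidableEq X] [Nonempty X] :
    ∑ g ∈ Gstar G X, piQ G X g = 1 := by
  have hvanish : ∀ g ∈ univ, piQ G X g ≠ 0 → (fixedPts G X g).Nonempty := fun g _ hg =>
    card_pos.mp (Nat.pos_of_ne_zero fun h0 => hg (by simp [piQ, h0]))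
  have hz : (numOrbits G X : ℝ) * Fintype.card G ≠ 0 := by
    have := numOrbits_pos (G := G) (X := X)
    positivity
  rw [Gstar, sum_filter_of_ne hvanish]
  simp only [piQ, ← sum_div]
  rw [← Nat.cast_sum, sum_card_fixedPts, Nat.cast_mul, div_self hz]

theorem sum_Gstar_sum_fixedPts_inter {M : Type*} [AddCommMonoid M] [Fintype G] [Fintype X]
    [DecidableEq X] (h : G) (f : X → M) :
    ∑ g ∈ Gstar G X, ∑ x ∈ fixedPts G X h ∩ fixedPts G X g, f x =
      ∑ x ∈ fixedPts G X h, (stab G X x).card • f x := by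
  rw [sum_comm' (s' := stab G X) (t' := fixedPts G X h)]
  · simp only [sum_const]
  · intro g x
    simp only [mem_Gstar, mem_inter, mem_fixedPts, mem_stab]
    exact ⟨fun ⟨_, hx, hg⟩ => ⟨hg, hx⟩,
      fun ⟨hg, hx⟩ => ⟨⟨x, mem_fixedPts.mpr hg⟩, hx, hg⟩⟩

theorem sum_Q_Gstar [Fintype G] [Fintype X] [DecidableEq X] {h : G} (hh : h ∈ Gstar G X) :
    ∑ g ∈ Gstar G X, Q G X h g = 1 := by
  have hXh : ((fixedPts G X h).card : ℝ) ≠ 0 := by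
    exact_mod_cast (card_pos.mpr (mem_Gstar.mp hh)).ne'
  calc ∑ g ∈ Gstar G X, Q G X h g
      = ∑ x ∈ fixedPts G X h,
          (stab G X x).card • (1 / (((fixedPts G X h).card : ℝ) * (stab G X x).card)) :=
        sum_Gstar_sum_fixedPts_inter h _
    _ = ∑ x ∈ fixedPts G X h, 1 / ((fixedPts G X h).card : ℝ) := by
        refine sum_congr rfl fun x _ => ?_
        have hx : ((stab G X x).card : ℝ) ≠ 0 := by exact_mod_cast (card_stab_pos x).ne'
        rw [nsmul_eq_mul]
        field_simp
    _ = 1 := by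
        rw [sum_const, nsmul_eq_mul, mul_one_div_cancel hXh]

theorem piQ_mul_Q [Fintype G] [Fintype X] [DecidableEq X] {g : G} (hg : g ∈ Gstar G X) (h : G) :
    piQ G X g * Q G X g h = ∑ x ∈ fixedPts G X g ∩ fixedPts G X h,
      1 / ((numOrbits G X : ℝ) * Fintype.card G * (stab G X x).card) := by
  have hXg : ((fixedPts G X g).card : ℝ) ≠ 0 := by
    exact_mod_cast (card_pos.mpr (mem_Gstar.mp hg)).ne'
  rw [piQ, Q, mul_sum]
  refine sum_congr rfl fun x _ => ?_
  field_simp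

theorem piQ_mul_Q_comm [Fintype G] [Fintype X] [DecidableEq X] {g h : G} (hg : g ∈ Gstar G X)
    (hh : h ∈ Gstar G X) : piQ G X g * Q G X g h = piQ G X h * Q G X h g := by
  rw [piQ_mul_Q hg, piQ_mul_Q hh, inter_comm]

end

/-- `π_Q` sums to `1` over `G*`, satisfies detailed balance for `Q`, and is stationary for `Q`. -/
theorem piQ_sum_one_detailed_balance_stationary :
    (∑ g ∈ Gstar G X, piQ G X g) = 1 ∧
    (∀ g ∈ Gstar G X, ∀ h ∈ Gstar G X,
      piQ G X g * Q G X g h = piQ G X h * Q G X h g) ∧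
    (∀ h ∈ Gstar G X, ∑ g ∈ Gstar G X, piQ G X g * Q G X g h = piQ G X h) :=
  have hdb : ∀ g ∈ Gstar G X, ∀ h ∈ Gstar G X,
      piQ G X g * Q G X g h = piQ G X h * Q G X h g := fun _ hg _ hh => piQ_mul_Q_comm hg hh
  ⟨sum_piQ_Gstar, hdb, fun _ hh =>
    sum_mul_eq_of_detailed_balance (fun _ hg => sum_Q_Gstar hg) hdb hh⟩

end
end

section
/- If μ is a probability distribution on X that is stationary for K, i.e. ∑_{x∈X} μ(x)·K(x,y) = μ(y) for all y ∈ X, then ν := μB, defined by ν(h) = ∑_{x∈X} μ(x)·B(x,h), is a probability distribution on G* that is stationary for Q (∑_{g∈G*} ν(g)·Q(g,h) = ν(h) for all h ∈ G*), and moreover ∑_{g∈G*} ν(g)·A(g,x) = μ(x) for all x ∈ X. Conversely, if ν is a probability distribution on G* stationary for Q, then μ := νA is a probability distribution on X stationary for K with μB = ν. -/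
open Finset

variable (G X : Type) [Group G] [Fintype G] [DecidableEq G]
  [Fintype X] [DecidableEq X] [Nonempty X] [MulAction G X]

noncomputable section

/-- The primal Burnside kernel `K(x,y) = ∑_{g ∈ G_x ∩ G_y} 1/(|G_x|·|X_g|)`. -/
def K (x y : X) : ℝ :=
  ∑ g ∈ stab G X x ∩ stab G X y,
    1 / (((stab G X x).card : ℝ) * ((fixedPts G X g).card : ℝ))

/-- The forward leg `A(g,x) = 1_{x ∈ X_g}/|X_g|`. -/
def A (g : G) (x : X) : ℝ :=
  if x ∈ fixedPts G X g then 1 / ((fixedPts G X g).card : ℝ) else 0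

/-- The backward leg `B(x,h) = 1_{h ∈ G_x}/|G_x|`. -/
def B (x : X) (h : G) : ℝ :=
  if h ∈ stab G X x then 1 / ((stab G X x).card : ℝ) else 0


lemma mem_fixed_iff (g : G) (x : X) : x ∈ fixedPts G X g ↔ g ∈ stab G X x := by
  simp [fixedPts, stab]

lemma stab_subset_Gstar {x : X} {g : G} (h : g ∈ stab G X x) : g ∈ Gstar G X := by
  simp only [Gstar, mem_filter, mem_univ, true_and]
  exact ⟨x, (mem_fixed_iff G X g x).2 h⟩

lemma one_mem_stab (x : X) : (1 : G) ∈ stab G X x := by simp [stab]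

lemma stab_card_pos (x : X) : 0 < (stab G X x).card :=
  Finset.card_pos.2 ⟨1, one_mem_stab G X x⟩

lemma fixed_card_pos {g : G} (h : g ∈ Gstar G X) : 0 < (fixedPts G X g).card := by
  simp only [Gstar, mem_filter, mem_univ, true_and] at h
  exact Finset.card_pos.2 h

lemma A_nonneg (g : G) (x : X) : 0 ≤ A G X g x := by
  unfold A; split <;> positivity

lemma B_nonneg (x : X) (h : G) : 0 ≤ B G X x h := by
  unfold B; split <;> positivity

lemma A_rowsum {g : G} (hg : g ∈ Gstar G X) : ∑ x : X, A G X g x = 1 := by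
  have hc : ((fixedPts G X g).card : ℝ) ≠ 0 := by
    exact_mod_cast (fixed_card_pos G X hg).ne'
  simp only [A, Finset.sum_ite_mem, Finset.univ_inter, Finset.sum_const, nsmul_eq_mul]
  field_simp

lemma B_rowsum (x : X) : ∑ h ∈ Gstar G X, B G X x h = 1 := by
  have hc : ((stab G X x).card : ℝ) ≠ 0 := by
    exact_mod_cast (stab_card_pos G X x).ne'
  simp only [B, Finset.sum_ite_mem]
  have : Gstar G X ∩ stab G X x = stab G X x := by
    apply Finset.inter_eq_right.2
    intro g hg; exact stab_subset_Gstar G X hg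
  rw [this, Finset.sum_const, nsmul_eq_mul]
  field_simp

lemma Q_eq (g h : G) : Q G X g h = ∑ x : X, A G X g x * B G X x h := by
  have key : ∀ x : X, A G X g x * B G X x h =
      if x ∈ fixedPts G X g ∩ fixedPts G X h then
        1 / (((fixedPts G X g).card : ℝ) * ((stab G X x).card : ℝ)) else 0 := by
    intro x
    by_cases h1 : x ∈ fixedPts G X g <;> by_cases h2 : h ∈ stab G X x <;>
      simp [A, B, Finset.mem_inter, mem_fixed_iff G X h x, h1, h2,
        div_mul_div_comm, mul_comm]
  rw [Finset.sum_congr rfl fun x _ => key x, Finset.sum_ite_mem, Finset.univ_inter, Q]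

lemma K_eq (x y : X) : K G X x y = ∑ g ∈ Gstar G X, B G X x g * A G X g y := by
  have key : ∀ g : G, B G X x g * A G X g y =
      if g ∈ stab G X x ∩ stab G X y then
        1 / (((stab G X x).card : ℝ) * ((fixedPts G X g).card : ℝ)) else 0 := by
    intro g
    by_cases h1 : g ∈ stab G X x <;> by_cases h2 : g ∈ stab G X y <;>
      simp [A, B, Finset.mem_inter, mem_fixed_iff G X g y, h1, h2,
        div_mul_div_comm, mul_comm]
  rw [Finset.sum_congr rfl fun g _ => key g, Finset.sum_ite_mem]
  have hsub : Gstar G X ∩ (stab G X x ∩ stab G X y) = stab G X x ∩ stab G X y := by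
    apply Finset.inter_eq_right.2
    intro g hg
    exact stab_subset_Gstar G X (Finset.mem_inter.1 hg).1
  rw [hsub, K]

/-- Transfer of stationarity: a stationary distribution `μ` for `K` pushes forward via `B` to a
stationary distribution `ν = μB` for `Q` with `νA = μ`; conversely a stationary distribution `ν`
for `Q` pushes forward via `A` to a stationary distribution `μ = νA` for `K` with `μB = ν`. -/
theorem stationary_transfer :
    (∀ μ : X → ℝ, (∀ x, 0 ≤ μ x) → (∑ x : X, μ x) = 1 →
      (∀ y : X, ∑ x : X, μ x * K G X x y = μ y) →
      ((∀ h : G, 0 ≤ ∑ x : X, μ x * B G X x h) ∧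
       (∑ h ∈ Gstar G X, ∑ x : X, μ x * B G X x h) = 1 ∧
       (∀ h ∈ Gstar G X,
         ∑ g ∈ Gstar G X, (∑ x : X, μ x * B G X x g) * Q G X g h
           = ∑ x : X, μ x * B G X x h) ∧
       (∀ x : X, ∑ g ∈ Gstar G X, (∑ x' : X, μ x' * B G X x' g) * A G X g x = μ x))) ∧
    (∀ ν : G → ℝ, (∀ g ∈ Gstar G X, 0 ≤ ν g) → (∑ g ∈ Gstar G X, ν g) = 1 →
      (∀ h ∈ Gstar G X, ∑ g ∈ Gstar G X, ν g * Q G X g h = ν h) →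
      ((∀ x : X, 0 ≤ ∑ g ∈ Gstar G X, ν g * A G X g x) ∧
       (∑ x : X, ∑ g ∈ Gstar G X, ν g * A G X g x) = 1 ∧
       (∀ y : X, ∑ x : X, (∑ g ∈ Gstar G X, ν g * A G X g x) * K G X x y
           = ∑ g ∈ Gstar G X, ν g * A G X g y) ∧
       (∀ h ∈ Gstar G X,
         ∑ x : X, (∑ g ∈ Gstar G X, ν g * A G X g x) * B G X x h = ν h))) := by
  constructor
  · intro μ hpos hsum hstat
    have hA : ∀ x : X, ∑ g ∈ Gstar G X, (∑ x' : X, μ x' * B G X x' g) * A G X g x = μ x := by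
      intro x
      calc ∑ g ∈ Gstar G X, (∑ x' : X, μ x' * B G X x' g) * A G X g x
          = ∑ g ∈ Gstar G X, ∑ x' : X, μ x' * B G X x' g * A G X g x := by
            simp [Finset.sum_mul]
        _ = ∑ x' : X, ∑ g ∈ Gstar G X, μ x' * B G X x' g * A G X g x := Finset.sum_comm
        _ = ∑ x' : X, μ x' * ∑ g ∈ Gstar G X, B G X x' g * A G X g x := by
            simp [Finset.mul_sum, mul_assoc]
        _ = ∑ x' : X, μ x' * K G X x' x := by simp [K_eq]
        _ = μ x := hstat x
    refine ⟨?_, ?_, ?_, hA⟩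
    · intro h
      exact Finset.sum_nonneg fun x _ => mul_nonneg (hpos x) (B_nonneg G X x h)
    · rw [Finset.sum_comm]
      calc ∑ x : X, ∑ h ∈ Gstar G X, μ x * B G X x h
          = ∑ x : X, μ x * ∑ h ∈ Gstar G X, B G X x h := by simp [Finset.mul_sum]
        _ = ∑ x : X, μ x := by simp [B_rowsum]
        _ = 1 := hsum
    · intro h _
      calc ∑ g ∈ Gstar G X, (∑ x : X, μ x * B G X x g) * Q G X g h
          = ∑ g ∈ Gstar G X, ∑ x : X, (∑ x' : X, μ x' * B G X x' g) * (A G X g x * B G X x h) := by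
            simp [Q_eq, Finset.mul_sum]
        _ = ∑ x : X, ∑ g ∈ Gstar G X, (∑ x' : X, μ x' * B G X x' g) * A G X g x * B G X x h := by
            rw [Finset.sum_comm]; simp [mul_assoc]
        _ = ∑ x : X, (∑ g ∈ Gstar G X, (∑ x' : X, μ x' * B G X x' g) * A G X g x) * B G X x h := by
            simp [Finset.sum_mul]
        _ = ∑ x : X, μ x * B G X x h := by simp only [hA]
  · intro ν hpos hsum hstat
    have hB : ∀ h ∈ Gstar G X,
        ∑ x : X, (∑ g ∈ Gstar G X, ν g * A G X g x) * B G X x h = ν h := by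
      intro h hh
      calc ∑ x : X, (∑ g ∈ Gstar G X, ν g * A G X g x) * B G X x h
          = ∑ x : X, ∑ g ∈ Gstar G X, ν g * A G X g x * B G X x h := by simp [Finset.sum_mul]
        _ = ∑ g ∈ Gstar G X, ∑ x : X, ν g * A G X g x * B G X x h := Finset.sum_comm
        _ = ∑ g ∈ Gstar G X, ν g * ∑ x : X, A G X g x * B G X x h := by
            simp [Finset.mul_sum, mul_assoc]
        _ = ∑ g ∈ Gstar G X, ν g * Q G X g h := by simp [Q_eq]
        _ = ν h := hstat h hh
    refine ⟨?_, ?_, ?_, hB⟩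
    · intro x
      exact Finset.sum_nonneg fun g hg => mul_nonneg (hpos g hg) (A_nonneg G X g x)
    · rw [Finset.sum_comm]
      calc ∑ g ∈ Gstar G X, ∑ x : X, ν g * A G X g x
          = ∑ g ∈ Gstar G X, ν g * ∑ x : X, A G X g x := by simp [Finset.mul_sum]
        _ = ∑ g ∈ Gstar G X, ν g := Finset.sum_congr rfl fun g hg => by rw [A_rowsum G X hg, mul_one]
        _ = 1 := hsum
    · intro y
      calc ∑ x : X, (∑ g ∈ Gstar G X, ν g * A G X g x) * K G X x y
          = ∑ x : X, ∑ h ∈ Gstar G X, (∑ g ∈ Gstar G X, ν g * A G X g x) * (B G X x h * A G X h y) := by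
            simp [K_eq, Finset.mul_sum]
        _ = ∑ h ∈ Gstar G X, ∑ x : X, (∑ g ∈ Gstar G X, ν g * A G X g x) * B G X x h * A G X h y := by
            rw [Finset.sum_comm]; simp [mul_assoc]
        _ = ∑ h ∈ Gstar G X, (∑ x : X, (∑ g ∈ Gstar G X, ν g * A G X g x) * B G X x h) * A G X h y := by
            simp [Finset.sum_mul]
        _ = ∑ h ∈ Gstar G X, ν h * A G X h y :=
            Finset.sum_congr rfl fun h hh => by rw [hB h hh]

end
end

section
/- For any integers n ≥ 0 and k ≥ 1, ∑_{g ∈ S_k} |Fix(g)|^n = k! · #{partitions of an n-element set into at most k nonempty blocks}, where the right-hand count is the number of set partitions (Finpartitions) of {1,…,n} having at most k blocks (equivalently, ∑_{m=0}^{k} S(n,m) with S(n,m) the Stirling numbers of the second kind). -/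
/-!
By Burnside's lemma applied to `S_k` acting on the maps `[n] → [k]`, the left-hand side is `k!`
times the number of orbits, since a map fixed by `g` is exactly a map into `Fix(g)`. Two maps lie
in the same orbit iff they have the same fibres, so orbits correspond to kernel partitions, and
the kernel partitions of maps into `[k]` are exactly the partitions with at most `k` blocks.
-/

open Finset MulAction

section FixedPoints

variable {α β G : Type*} [Group G] [MulAction G β]

lemma card_fixedBy_pi [Finite α] (g : G) :
    Nat.card (fixedBy (α → β) g) = Nat.card (fixedBy β g) ^ Nat.card α := by
  rw [← Nat.card_fun]
  exact Nat.card_congr <| (Equiv.subtypeEquivRight fun _ => funext_iff).trans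
    (Equiv.subtypePiEquivPi (p := fun _ b => b ∈ fixedBy β g))

end FixedPoints

lemma Setoid.ker_eq_ker_iff_exists_perm {α β : Type*} [Finite β] {f f' : α → β} :
    Setoid.ker f = Setoid.ker f' ↔ ∃ σ : Equiv.Perm β, σ ∘ f = f' := by
  classical
  constructor
  · intro h
    let e : Set.range f ≃ Set.range f' := (Setoid.quotientKerEquivRange f).symm.trans
      ((Quotient.congrRight fun a b => by rw [h]).trans (Setoid.quotientKerEquivRange f'))
    have he : ∀ a, e ⟨f a, a, rfl⟩ = ⟨f' a, a, rfl⟩ := fun a => by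
      have hsymm : (Setoid.quotientKerEquivRange f).symm ⟨f a, a, rfl⟩ = ⟦a⟧ :=
        (Equiv.symm_apply_eq _).2 rfl
      simp only [e, Equiv.trans_apply, hsymm]
      rfl
    refine ⟨Equiv.extendSubtype e, funext fun a => ?_⟩
    simp [Equiv.extendSubtype_apply_of_mem e (f a) ⟨a, rfl⟩, he]
  · rintro ⟨σ, rfl⟩
    ext a b
    simp [Setoid.ker_def]

namespace Finpartition

variable {α : Type*} [DecidableEq α]

lemma parts_eq_image_part {s : Finset α} (P : Finpartition s) : P.parts = s.image P.part := by
  ext t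
  refine ⟨fun ht => ?_, ?_⟩
  · obtain ⟨a, ha, rfl⟩ := P.part_surjOn ht
    exact mem_image_of_mem _ ha
  · rw [mem_image]
    rintro ⟨a, ha, rfl⟩
    exact P.part_mem.2 ha

lemma ext_part {s : Finset α} {P Q : Finpartition s} (h : ∀ a ∈ s, P.part a = Q.part a) :
    P = Q := by
  ext1
  rw [parts_eq_image_part, parts_eq_image_part]
  exact image_congr h

variable [Fintype α] {β : Type*} [DecidableEq β]

def kerPartition (f : α → β) : Finpartition (univ : Finset α) :=
  ofSetoid (Setoid.ker f)

lemma mem_part_kerPartition {f : α → β} {a b : α} :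
    b ∈ (kerPartition f).part a ↔ f a = f b :=
  mem_part_ofSetoid_iff_rel

lemma kerPartition_eq_iff {f f' : α → β} :
    kerPartition f = kerPartition f' ↔ Setoid.ker f = Setoid.ker f' := by
  refine ⟨fun h => ?_, fun h => ext_part fun a _ => ?_⟩
  · ext a b
    rw [Setoid.ker_def, Setoid.ker_def, ← mem_part_kerPartition, h, mem_part_kerPartition]
  · ext b
    rw [mem_part_kerPartition, mem_part_kerPartition, ← Setoid.ker_def, h, Setoid.ker_def]

lemma card_parts_kerPartition_le [Fintype β] (f : α → β) :
    #(kerPartition f).parts ≤ Fintype.card β := by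
  refine card_le_card_of_surjOn (fun v => ({b | v = f b} : Finset α)) fun t ht => ?_
  obtain ⟨a, -, rfl⟩ := (kerPartition f).part_surjOn ht
  refine ⟨f a, mem_coe.2 (mem_univ _), ?_⟩
  ext b
  simp [mem_part_kerPartition]

lemma exists_kerPartition_eq [Fintype β] (P : Finpartition (univ : Finset α))
    (hP : #P.parts ≤ Fintype.card β) : ∃ f : α → β, kerPartition f = P := by
  obtain ⟨ι⟩ :=
    Function.Embedding.nonempty_of_card_le (α := P.parts) (β := β) (by simpa using hP)
  refine ⟨fun a => ι ⟨P.part a, P.part_mem.2 (mem_univ a)⟩, ext_part fun a _ => ?_⟩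
  ext b
  rw [mem_part_kerPartition, ι.injective.eq_iff, Subtype.mk.injEq, eq_comm,
    P.mem_part_iff_part_eq_part (mem_univ b) (mem_univ a)]

end Finpartition

section Orbits

open Finpartition

variable {α β : Type*} [Fintype α] [DecidableEq α] [Fintype β] [DecidableEq β]

lemma orbitRel_perm_pi_iff {f f' : α → β} :
    orbitRel (Equiv.Perm β) (α → β) f f' ↔ kerPartition f = kerPartition f' := by
  rw [orbitRel_apply, mem_orbit_iff, kerPartition_eq_iff, eq_comm,
    Setoid.ker_eq_ker_iff_exists_perm]
  rfl

noncomputable def orbitsPermPiEquiv :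
    orbitRel.Quotient (Equiv.Perm β) (α → β) ≃
      {P : Finpartition (univ : Finset α) // #P.parts ≤ Fintype.card β} :=
  (Quotient.congrRight fun _ _ => by
      rw [orbitRel_perm_pi_iff, Setoid.ker_def, Subtype.mk.injEq]).trans
    (Setoid.quotientKerEquivOfSurjective
      (fun f => ⟨kerPartition f, card_parts_kerPartition_le f⟩)
      fun ⟨P, hP⟩ => (exists_kerPartition_eq P hP).imp fun _ hf => Subtype.ext hf)

end Orbits

theorem sum_fix_pow_eq_factorial_mul_partition_count_general (n k : ℕ) :
    (∑ g : Equiv.Perm (Fin k), ((Finset.univ.filter fun a : Fin k => g a = a).card) ^ n)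
      = k.factorial *
        Nat.card {P : Finpartition (Finset.univ : Finset (Fin n)) // P.parts.card ≤ k} := by
  classical
  have hfix (g : Equiv.Perm (Fin k)) :
      Fintype.card (fixedBy (Fin n → Fin k) g) = #{a | g a = a} ^ n := by
    rw [← Nat.card_eq_fintype_card, card_fixedBy_pi, Nat.card_eq_fintype_card,
      Fintype.card_subtype, Nat.card_fin]
    rfl
  calc ∑ g : Equiv.Perm (Fin k), #{a | g a = a} ^ n
      = ∑ g : Equiv.Perm (Fin k), Fintype.card (fixedBy (Fin n → Fin k) g) := by
        simp only [hfix]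
    _ = Fintype.card (orbitRel.Quotient (Equiv.Perm (Fin k)) (Fin n → Fin k)) * k.factorial := by
      rw [sum_card_fixedBy_eq_card_orbits_mul_card_group, Fintype.card_perm, Fintype.card_fin]
    _ = _ := by
      rw [← Nat.card_eq_fintype_card, Nat.card_congr orbitsPermPiEquiv, Fintype.card_fin,
        mul_comm]

/-- `∑_{g ∈ S_k} |Fix(g)|^n = k! · #{set partitions of [n] into at most k blocks}`. -/
theorem sum_fix_pow_eq_factorial_mul_partition_count (n k : ℕ) (hk : 1 ≤ k) :
    (∑ g : Equiv.Perm (Fin k), ((Finset.univ.filter fun a : Fin k => g a = a).card) ^ n)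
      = k.factorial *
        Nat.card {P : Finpartition (Finset.univ : Finset (Fin n)) // P.parts.card ≤ k} :=
  sum_fix_pow_eq_factorial_mul_partition_count_general n k
end

section
/- For any integer k ≥ 0, in the polynomial ring ℤ[X] one has the identity ∑_{g ∈ S_k} X^{|Fix(g)|} = ∑_{m=0}^{k} (k!/m!)·(X−1)^m, where k!/m! denotes the integer k·(k−1)⋯(m+1). -/
open Finset Polynomial

/-- Number of permutations of `Fin k` fixing a given `m`-element set pointwise is `(k-m)!`. -/
lemma card_fixing_perm (k : ℕ) (S : Finset (Fin k)) :
    (Finset.univ.filter fun g : Equiv.Perm (Fin k) => ∀ a ∈ S, g a = a).card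
      = Nat.factorial (k - S.card) := by
  classical
  have e : Equiv.Perm {a : Fin k // a ∉ S} ≃
      {g : Equiv.Perm (Fin k) // ∀ a ∈ S, g a = a} := by
    refine (Equiv.Perm.subtypeEquivSubtypePerm (fun a => a ∉ S)).trans
      (Equiv.subtypeEquiv (Equiv.refl _) ?_)
    intro g
    simp only [Equiv.refl_apply]
    constructor
    · intro h a ha; exact h a (by simpa using ha)
    · intro h a ha; exact h a (by simpa using ha)
  have h1 : Fintype.card {g : Equiv.Perm (Fin k) // ∀ a ∈ S, g a = a}
      = Fintype.card (Equiv.Perm {a : Fin k // a ∉ S}) := (Fintype.card_congr e).symm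
  rw [Fintype.card_perm] at h1
  have h2 : Fintype.card {a : Fin k // a ∉ S} = k - S.card := by
    simp [Fintype.card_subtype, Finset.filter_not, Finset.card_sdiff_of_subset (Finset.subset_univ _),
      Finset.filter_mem_eq_inter]
  rw [h2] at h1
  rw [← h1, Fintype.card_subtype]

/-- Key counting identity: summing `choose |Fix g| m` over all permutations counts pairs
`(g, S)` with `S ⊆ Fix g`, `|S| = m`. -/
lemma sum_choose_fix (k m : ℕ) (hm : m ≤ k) :
    (∑ g : Equiv.Perm (Fin k),
        ((Finset.univ.filter fun a : Fin k => g a = a).card).choose m)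
      = Nat.descFactorial k (k - m) := by
  classical
  have step : ∀ g : Equiv.Perm (Fin k),
      ((Finset.univ.filter fun a : Fin k => g a = a).card).choose m
        = ∑ S ∈ Finset.powersetCard m (Finset.univ : Finset (Fin k)),
            (if ∀ a ∈ S, g a = a then 1 else 0) := by
    intro g
    have hps : Finset.powersetCard m (Finset.univ.filter fun a : Fin k => g a = a)
        = (Finset.powersetCard m (Finset.univ : Finset (Fin k))).filter
            (fun S => ∀ a ∈ S, g a = a) := by
      ext S
      simp only [Finset.mem_powersetCard, Finset.mem_filter, Finset.subset_iff,
        Finset.mem_filter, Finset.mem_univ, true_and, Finset.subset_univ]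
      tauto
    rw [← Finset.card_powersetCard, hps, Finset.card_filter]
  simp_rw [step]
  rw [Finset.sum_comm]
  have inner : ∀ S ∈ Finset.powersetCard m (Finset.univ : Finset (Fin k)),
      (∑ g : Equiv.Perm (Fin k), (if ∀ a ∈ S, g a = a then 1 else 0))
        = Nat.factorial (k - m) := by
    intro S hS
    rw [← Finset.card_filter, card_fixing_perm]
    congr 1
    rw [(Finset.mem_powersetCard.mp hS).2]
  rw [Finset.sum_congr rfl inner, Finset.sum_const,
    Finset.card_powersetCard, Finset.card_univ, Fintype.card_fin, smul_eq_mul]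
  rw [Nat.descFactorial_eq_factorial_mul_choose, Nat.choose_symm hm, mul_comm]

/-- Generating polynomial of fixed-point counts over the symmetric group:
`∑_{g ∈ S_k} X^{|Fix(g)|} = ∑_{m=0}^{k} (k!/m!)·(X−1)^m` in `ℤ[X]`,
where `k!/m! = k·(k−1)⋯(m+1)` is the descending factorial `k.descFactorial (k−m)`. -/
theorem sum_X_pow_fix_eq (k : ℕ) :
    (∑ g : Equiv.Perm (Fin k),
        (Polynomial.X : Polynomial ℤ) ^ ((Finset.univ.filter fun a : Fin k => g a = a).card))
      = ∑ m ∈ Finset.range (k + 1),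
          (Nat.descFactorial k (k - m) : Polynomial ℤ) * (Polynomial.X - 1) ^ m := by
  classical
  have expand : ∀ g : Equiv.Perm (Fin k),
      (Polynomial.X : Polynomial ℤ) ^ ((Finset.univ.filter fun a : Fin k => g a = a).card)
        = ∑ m ∈ Finset.range (k + 1),
            (((Finset.univ.filter fun a : Fin k => g a = a).card).choose m : Polynomial ℤ)
              * (Polynomial.X - 1) ^ m := by
    intro g
    set n := (Finset.univ.filter fun a : Fin k => g a = a).card with hn
    have hnk : n ≤ k := by
      rw [hn]; exact (Finset.card_filter_le _ _).trans (by simp)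
    have : (Polynomial.X : Polynomial ℤ) = (Polynomial.X - 1) + 1 := by ring
    rw [this, add_pow]
    simp only [one_pow, mul_one]
    rw [Finset.sum_subset (Finset.range_subset_range.mpr (Nat.succ_le_succ hnk))]
    · apply Finset.sum_congr rfl; intro m _; ring
    · intro m _ hm
      rw [Finset.mem_range, not_lt] at hm
      rw [Nat.choose_eq_zero_of_lt (by omega)]
      simp
  simp_rw [expand]
  rw [Finset.sum_comm]
  apply Finset.sum_congr rfl
  intro m hm
  rw [Finset.mem_range] at hm
  rw [← Finset.sum_mul]
  congr 1
  rw [← Nat.cast_sum, sum_choose_fix k m (by omega)]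
end
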